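/- arXiv:2003.00534 — 5 statements merged into one kernel-verified Lean document; each statement's English description precedes it below -/
import Mathlib

section
/- (Pushback property of KL divergence) Let Δ be the probability simplex in ℝ^d and f : Δ → ℝ a concave function. Fix y in the interior of Δ and α > 0. If x* maximizes x ↦ f(x) - α⁻¹·D(x‖y) over Δ, where D denotes KL divergence, then for every z ∈ Δ: f(x*) - α⁻¹·D(x*‖y) ≥ f(z) - α⁻¹·D(z‖y) + α⁻¹·D(z‖x*). -/
open Finset

/-- The probability simplex in `ℝ^d`. -/
def simplex (d : ℕ) : Set (Fin d → ℝ) :=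
  {x | (∀ i, 0 ≤ x i) ∧ ∑ i, x i = 1}

/-- KL divergence on `ℝ^d` (with the convention `0 · log 0 = 0`, via `log 0 = 0`). -/
noncomputable def klDiv {d : ℕ} (p q : Fin d → ℝ) : ℝ :=
  ∑ i, p i * Real.log (p i / q i)

/-!
For `x_t = (1 - t) x⋆ + t z` with `t ∈ (0, 1]` and `x_t > 0`, maximality of `x⋆`, concavity of `f`
and the tangent-line inequality of the convex map `u ↦ u log (u / y)` at `x_t` give
`∑ (x⋆ᵢ - zᵢ) log (x_tᵢ / yᵢ) ≤ α (f x⋆ - f z)`. For `z = y` every summand is nonnegative, and the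
`j`-th one is `-yⱼ log t` if `x⋆ⱼ = 0`, which is unbounded as `t → 0`; so `x⋆` is interior. Letting
`t → 0` then yields the first-order condition, which is the claim by the three-point identity
`D(x⋆‖y) - D(z‖y) + D(z‖x⋆) = ∑ (x⋆ᵢ - zᵢ) log (x⋆ᵢ / yᵢ)`.
-/

lemma convex_simplex (d : ℕ) : Convex ℝ (simplex d) := convex_stdSimplex ℝ (Fin d)

lemma mul_log_div_tangent_le {u v y : ℝ} (hu : 0 ≤ u) (hv : 0 < v) (hy : 0 < y) :
    v * Real.log (v / y) + (u - v) * (Real.log (v / y) + 1) ≤ u * Real.log (u / y) := by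
  rcases hu.eq_or_lt with rfl | hu
  · rw [zero_mul]
    linarith
  · have hlog : u * Real.log (v / u) ≤ v - u := by
      have := mul_le_mul_of_nonneg_left (Real.log_le_sub_one_of_pos (div_pos hv hu)) hu.le
      rwa [mul_sub, mul_div_cancel₀ _ hu.ne', mul_one] at this
    rw [Real.log_div hv.ne' hy.ne', Real.log_div hu.ne' hy.ne']
    rw [Real.log_div hv.ne' hu.ne'] at hlog
    linarith

lemma sub_mul_log_segment_div_nonneg {a b t : ℝ} (ha : 0 ≤ a) (hb : 0 < b) (ht0 : 0 ≤ t)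
    (ht1 : t ≤ 1) : 0 ≤ (a - b) * Real.log (((1 - t) * a + t * b) / b) := by
  rcases le_total b a with hba | hab
  · refine mul_nonneg (sub_nonneg.2 hba) (Real.log_nonneg ?_)
    rw [le_div_iff₀ hb]
    nlinarith
  · refine mul_nonneg_of_nonpos_of_nonpos (sub_nonpos.2 hab) (Real.log_nonpos (by positivity) ?_)
    rw [div_le_one hb]
    nlinarith

section

variable {d : ℕ}

lemma klDiv_tangent_le {x v y : Fin d → ℝ} (hx : ∀ i, 0 ≤ x i) (hv : ∀ i, 0 < v i)
    (hy : ∀ i, 0 < y i) :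
    klDiv v y + ∑ i, (x i - v i) * (Real.log (v i / y i) + 1) ≤ klDiv x y := by
  rw [klDiv, klDiv, ← sum_add_distrib]
  exact sum_le_sum fun i _ => mul_log_div_tangent_le (hx i) (hv i) (hy i)

lemma klDiv_sub_klDiv_add_klDiv {x y z : Fin d → ℝ} (hx : ∀ i, x i ≠ 0) (hy : ∀ i, y i ≠ 0) :
    klDiv x y - klDiv z y + klDiv z x = ∑ i, (x i - z i) * Real.log (x i / y i) := by
  rw [klDiv, klDiv, klDiv, ← sum_sub_distrib, ← sum_add_distrib]
  refine sum_congr rfl fun i _ => ?_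
  rcases eq_or_ne (z i) 0 with hz | hz
  · simp [hz]
  · rw [Real.log_div hz (hy i), Real.log_div hz (hx i), Real.log_div (hx i) (hy i)]
    ring

variable {f : (Fin d → ℝ) → ℝ} {y xstar z : Fin d → ℝ} {α : ℝ}

lemma sum_sub_mul_log_segment_le (hα : 0 < α) (hf : ConcaveOn ℝ (simplex d) f)
    (hypos : ∀ i, 0 < y i) (hxstar : xstar ∈ simplex d)
    (hmax : IsMaxOn (fun x => f x - α⁻¹ * klDiv x y) (simplex d) xstar) (hz : z ∈ simplex d)
    {t : ℝ} (ht0 : 0 < t) (ht1 : t ≤ 1) (hpos : ∀ i, 0 < (1 - t) * xstar i + t * z i) :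
    ∑ i, (xstar i - z i) * Real.log (((1 - t) * xstar i + t * z i) / y i)
      ≤ α * (f xstar - f z) := by
  set xt : Fin d → ℝ := (1 - t) • xstar + t • z
  set S := ∑ i, (xstar i - z i) * Real.log (xt i / y i)
  have hxt : xt ∈ simplex d :=
    convex_simplex d hxstar hz (by linarith) ht0.le (by ring)
  have hconc : (1 - t) * f xstar + t * f z ≤ f xt :=
    hf.2 hxstar hz (by linarith) ht0.le (by ring)
  have htangent : klDiv xt y + t * S ≤ klDiv xstar y := by
    have hshift : ∑ i, (xstar i - xt i) * (Real.log (xt i / y i) + 1)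
        = t * S + t * (∑ i, xstar i - ∑ i, z i) := by
      simp only [S, mul_sum, ← sum_sub_distrib, ← sum_add_distrib]
      refine sum_congr rfl fun i _ => ?_
      simp only [xt, Pi.add_apply, Pi.smul_apply, smul_eq_mul]
      ring
    rw [hxstar.2, hz.2, sub_self, mul_zero, add_zero] at hshift
    rw [← hshift]
    exact klDiv_tangent_le hxstar.1 hpos hypos
  have hopt := isMaxOn_iff.1 hmax xt hxt
  have hkl : α⁻¹ * (t * S) ≤ α⁻¹ * (klDiv xstar y - klDiv xt y) :=
    mul_le_mul_of_nonneg_left (by linarith) (inv_pos.2 hα).le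
  have hscaled : t * (α⁻¹ * S) ≤ t * (f xstar - f z) := by
    rw [mul_left_comm]
    linarith
  exact (inv_mul_le_iff₀ hα).1 (le_of_mul_le_mul_left hscaled ht0)

lemma pos_of_isMaxOn_sub_klDiv (hα : 0 < α) (hf : ConcaveOn ℝ (simplex d) f) (hy : y ∈ simplex d)
    (hypos : ∀ i, 0 < y i) (hxstar : xstar ∈ simplex d)
    (hmax : IsMaxOn (fun x => f x - α⁻¹ * klDiv x y) (simplex d) xstar) (j : Fin d) :
    0 < xstar j := by
  refine (hxstar.1 j).lt_of_ne fun hj => ?_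
  set C := α * (f xstar - f y) + 1
  set M := max 1 (C / y j)
  set t := Real.exp (-M)
  have ht0 : 0 < t := Real.exp_pos _
  have ht1 : t < 1 := Real.exp_lt_one_iff.2 (by linarith [le_max_left 1 (C / y j)])
  have hpos : ∀ i, 0 < (1 - t) * xstar i + t * y i := fun i => by
    nlinarith [hxstar.1 i, hypos i]
  have hbound := sum_sub_mul_log_segment_le hα hf hypos hxstar hmax hy ht0 ht1.le hpos
  have hterm : y j * M ≤ ∑ i, (xstar i - y i) * Real.log (((1 - t) * xstar i + t * y i) / y i) := by
    refine le_trans (le_of_eq ?_) (single_le_sum (fun i _ =>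
      sub_mul_log_segment_div_nonneg (hxstar.1 i) (hypos i) ht0.le ht1.le) (mem_univ j))
    rw [← hj, mul_zero, zero_add, mul_div_cancel_right₀ _ (hypos j).ne', Real.log_exp]
    ring
  have hM : C / y j ≤ M := le_max_right _ _
  rw [div_le_iff₀ (hypos j)] at hM
  linarith

lemma sum_sub_mul_log_div_le (hα : 0 < α) (hf : ConcaveOn ℝ (simplex d) f)
    (hypos : ∀ i, 0 < y i) (hxstar : xstar ∈ simplex d) (hxpos : ∀ i, 0 < xstar i)
    (hmax : IsMaxOn (fun x => f x - α⁻¹ * klDiv x y) (simplex d) xstar) (hz : z ∈ simplex d) :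
    ∑ i, (xstar i - z i) * Real.log (xstar i / y i) ≤ α * (f xstar - f z) := by
  set F : ℝ → ℝ := fun t => ∑ i, (xstar i - z i) * Real.log (((1 - t) * xstar i + t * z i) / y i)
  have hF : ContinuousAt F 0 := by
    have hne : ∀ i, ((1 - 0) * xstar i + 0 * z i) / y i ≠ 0 := fun i => by
      simpa using (div_pos (hxpos i) (hypos i)).ne'
    fun_prop (disch := exact hne _)
  have hbound : ∀ᶠ t in nhdsWithin 0 (Set.Ioi 0), F t ≤ α * (f xstar - f z) := by
    filter_upwards [Ioo_mem_nhdsGT (zero_lt_one' ℝ)] with t ht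
    refine sum_sub_mul_log_segment_le hα hf hypos hxstar hmax hz ht.1 ht.2.le fun i => ?_
    nlinarith [hxpos i, hz.1 i, ht.1, ht.2]
  simpa [F] using le_of_tendsto (hF.tendsto.mono_left nhdsWithin_le_nhds) hbound

end

/-- Pushback property of the KL divergence: if `x⋆` maximizes
`x ↦ f x - α⁻¹ D(x‖y)` over the simplex, with `f` concave and `y` interior, then for
every `z` in the simplex,
`f x⋆ - α⁻¹ D(x⋆‖y) ≥ f z - α⁻¹ D(z‖y) + α⁻¹ D(z‖x⋆)`. -/
theorem kl_pushback {d : ℕ} (f : (Fin d → ℝ) → ℝ) (y xstar : Fin d → ℝ) (α : ℝ)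
    (hα : 0 < α)
    (hf : ConcaveOn ℝ (simplex d) f)
    (hy : y ∈ simplex d) (hypos : ∀ i, 0 < y i)
    (hxstar : xstar ∈ simplex d)
    (hmax : ∀ x ∈ simplex d, f x - α⁻¹ * klDiv x y ≤ f xstar - α⁻¹ * klDiv xstar y) :
    ∀ z ∈ simplex d,
      f xstar - α⁻¹ * klDiv xstar y ≥ f z - α⁻¹ * klDiv z y + α⁻¹ * klDiv z xstar := by
  intro z hz
  have hmax' := isMaxOn_iff.2 hmax
  have hxpos := pos_of_isMaxOn_sub_klDiv hα hf hy hypos hxstar hmax'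
  have hfirst := sum_sub_mul_log_div_le hα hf hypos hxstar hxpos hmax' hz
  rw [← klDiv_sub_klDiv_add_klDiv (fun i => (hxpos i).ne') (fun i => (hypos i).ne'),
    ← inv_mul_le_iff₀ hα, mul_add, mul_sub] at hfirst
  linarith
end

section
/- (Elliptical potential lemma) Let (φ_i)_{i≥1} be vectors in ℝ^d with ‖φ_i‖₂ ≤ 1, and Λ₀ a positive definite matrix with smallest eigenvalue λ_min(Λ₀) ≥ 1. Define Λ_t = Λ₀ + ∑_{i=1}^{t-1} φ_i φ_iᵀ. Then for every t ≥ 1: log(det(Λ_{t+1})/det(Λ₁)) ≤ ∑_{i=1}^{t} φ_iᵀ Λ_i⁻¹ φ_i ≤ 2·log(det(Λ_{t+1})/det(Λ₁)). -/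
/-!
Writing `x_i = φ_iᵀ Λ_i⁻¹ φ_i`, the matrix determinant lemma gives
`det Λ_{i+1} = det Λ_i (1 + x_i)`, so `log (det Λ_{t+1} / det Λ₁) = ∑ log (1 + x_i)`.
Since `Λ_i ≥ Λ₀ ≥ I` and `‖φ_i‖ ≤ 1`, each `x_i` lies in `[0, 1]`, where
`log (1 + x) ≤ x ≤ 2 log (1 + x)`.
-/

open Finset Matrix

theorem Real.le_two_mul_log_one_add {x : ℝ} (h0 : 0 ≤ x) (h1 : x ≤ 1) :
    x ≤ 2 * Real.log (1 + x) := by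
  have hpos : 0 < 1 + x := by linarith
  have hhalf : x / 2 ≤ 1 - (1 + x)⁻¹ := by
    rw [le_sub_iff_add_le, ← le_sub_iff_add_le', inv_le_iff_one_le_mul₀ hpos]
    nlinarith
  linarith [Real.one_sub_inv_le_log_of_pos hpos]

theorem eq_mul_prod_Icc_of_succ_eq_mul {M : Type*} [CommMonoid M] {f g : ℕ → M}
    (h : ∀ i, 1 ≤ i → f (i + 1) = f i * g i) (t : ℕ) :
    f (t + 1) = f 1 * ∏ i ∈ Icc 1 t, g i := by
  induction t with
  | zero => simp
  | succ t ih =>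
    rw [h (t + 1) (by omega), ih, prod_Icc_succ_top (by omega), mul_assoc]

namespace Matrix

variable {n : Type*} [Fintype n]

theorem dotProduct_self_le_add_mulVec_of_posSemidef {A B : Matrix n n ℝ}
    (hA : ∀ v, v ⬝ᵥ v ≤ v ⬝ᵥ (A *ᵥ v)) (hB : B.PosSemidef) (v : n → ℝ) :
    v ⬝ᵥ v ≤ v ⬝ᵥ ((A + B) *ᵥ v) := by
  have hBv := hB.dotProduct_mulVec_nonneg v
  rw [star_trivial] at hBv
  rw [add_mulVec, dotProduct_add]
  linarith [hA v]

variable [DecidableEq n]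

theorem det_add_vecMulVec {R : Type*} [CommRing R] {A : Matrix n n R} (hA : IsUnit A.det)
    (u v : n → R) : (A + vecMulVec u v).det = A.det * (1 + v ⬝ᵥ (A⁻¹ *ᵥ u)) := by
  rw [vecMulVec_eq Unit, det_add_replicateCol_mul_replicateRow hA, det_unique (1 + _),
    add_apply, one_apply_eq, ← replicateRow_vecMul, replicateRow_mul_replicateCol_apply,
    ← dotProduct_mulVec]

theorem isUnit_of_dotProduct_self_le {A : Matrix n n ℝ}
    (hA : ∀ v, v ⬝ᵥ v ≤ v ⬝ᵥ (A *ᵥ v)) : IsUnit A := by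
  refine mulVec_injective_iff_isUnit.1 fun v w hvw => ?_
  have h := hA (v - w)
  rw [mulVec_sub, hvw, sub_self, dotProduct_zero] at h
  have h0 : (v - w) ⬝ᵥ (v - w) = 0 :=
    le_antisymm h (by simpa using dotProduct_star_self_nonneg (v - w))
  exact sub_eq_zero.1 (dotProduct_self_eq_zero.1 h0)

theorem dotProduct_inv_mulVec_mem_Icc {A : Matrix n n ℝ}
    (hA : ∀ v, v ⬝ᵥ v ≤ v ⬝ᵥ (A *ᵥ v)) {u : n → ℝ} (hu : u ⬝ᵥ u ≤ 1) :
    u ⬝ᵥ (A⁻¹ *ᵥ u) ∈ Set.Icc 0 1 := by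
  -- `w = A⁻¹ u` has `‖w‖² ≤ w ⬝ᵥ A w = u ⬝ᵥ w`, so `0 ≤ ‖u - w‖² ≤ 1 - u ⬝ᵥ w`.
  set w := A⁻¹ *ᵥ u
  have hdet : IsUnit A.det := (isUnit_iff_isUnit_det A).1 (isUnit_of_dotProduct_self_le hA)
  have hAw : A *ᵥ w = u := by rw [mulVec_mulVec, mul_nonsing_inv _ hdet, one_mulVec]
  have hw : w ⬝ᵥ w ≤ u ⬝ᵥ w := by simpa [hAw, dotProduct_comm w u] using hA w
  have hdiff : 0 ≤ (u - w) ⬝ᵥ (u - w) := by simpa using dotProduct_star_self_nonneg (u - w)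
  simp only [sub_dotProduct, dotProduct_sub, dotProduct_comm w u] at hdiff
  constructor
  · linarith [show 0 ≤ w ⬝ᵥ w by simpa using dotProduct_star_self_nonneg w]
  · linarith

end Matrix

theorem elliptical_potential_general {d : ℕ}
    (φ : ℕ → (Fin d → ℝ)) (Λ₀ : Matrix (Fin d) (Fin d) ℝ)
    (hφ : ∀ i, φ i ⬝ᵥ φ i ≤ 1)
    (hmin : ∀ v : Fin d → ℝ, v ⬝ᵥ v ≤ v ⬝ᵥ (Λ₀ *ᵥ v))
    (Λ : ℕ → Matrix (Fin d) (Fin d) ℝ)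
    (hΛ : ∀ t, Λ t = Λ₀ + ∑ i ∈ Finset.Ico 1 t, vecMulVec (φ i) (φ i)) :
    ∀ t : ℕ, 1 ≤ t →
      Real.log ((Λ (t + 1)).det / (Λ 1).det)
          ≤ ∑ i ∈ Finset.Icc 1 t, φ i ⬝ᵥ ((Λ i)⁻¹ *ᵥ φ i) ∧
      ∑ i ∈ Finset.Icc 1 t, φ i ⬝ᵥ ((Λ i)⁻¹ *ᵥ φ i)
          ≤ 2 * Real.log ((Λ (t + 1)).det / (Λ 1).det) := by
  have hΛ_ge : ∀ t v, v ⬝ᵥ v ≤ v ⬝ᵥ (Λ t *ᵥ v) := fun t => by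
    rw [hΛ t]
    exact dotProduct_self_le_add_mulVec_of_posSemidef hmin
      (posSemidef_sum _ fun i _ => by simpa using posSemidef_vecMulVec_self_star (φ i))
  have hunit : ∀ t, IsUnit (Λ t).det := fun t =>
    (isUnit_iff_isUnit_det _).1 (isUnit_of_dotProduct_self_le (hΛ_ge t))
  set x : ℕ → ℝ := fun i => φ i ⬝ᵥ ((Λ i)⁻¹ *ᵥ φ i)
  have hx : ∀ i, x i ∈ Set.Icc 0 1 := fun i => dotProduct_inv_mulVec_mem_Icc (hΛ_ge i) (hφ i)
  have hdet : ∀ t, (Λ (t + 1)).det = (Λ 1).det * ∏ i ∈ Icc 1 t, (1 + x i) :=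
    eq_mul_prod_Icc_of_succ_eq_mul (f := fun t => (Λ t).det) fun i hi => by
      rw [hΛ (i + 1), sum_Ico_succ_top hi, ← add_assoc, ← hΛ i, det_add_vecMulVec (hunit i)]
  intro t _
  have hlog : Real.log ((Λ (t + 1)).det / (Λ 1).det) = ∑ i ∈ Icc 1 t, Real.log (1 + x i) := by
    rw [hdet t, mul_div_cancel_left₀ _ (hunit 1).ne_zero, Real.log_prod]
    exact fun i _ => by linarith [(hx i).1]
  rw [hlog, mul_sum]
  refine ⟨sum_le_sum fun i _ => ?_,
    sum_le_sum fun i _ => Real.le_two_mul_log_one_add (hx i).1 (hx i).2⟩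
  linarith [Real.log_le_sub_one_of_pos (show 0 < 1 + x i by linarith [(hx i).1])]

/-- Elliptical potential lemma. `φ i` (for `i ≥ 1`) are vectors with `‖φ i‖₂ ≤ 1`,
`Λ₀` is positive definite with smallest eigenvalue at least `1` (expressed as
`vᵀ Λ₀ v ≥ ‖v‖²` for all `v`), and `Λ t = Λ₀ + ∑_{i=1}^{t-1} φ_i φ_iᵀ`. Then for
every `t ≥ 1`,
`log(det Λ_{t+1} / det Λ₁) ≤ ∑_{i=1}^t φ_iᵀ Λ_i⁻¹ φ_i ≤ 2 log(det Λ_{t+1} / det Λ₁)`. -/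
theorem elliptical_potential {d : ℕ} (hd : 1 ≤ d)
    (φ : ℕ → (Fin d → ℝ)) (Λ₀ : Matrix (Fin d) (Fin d) ℝ)
    (hφ : ∀ i, φ i ⬝ᵥ φ i ≤ 1)
    (hΛ₀ : Λ₀.PosDef)
    (hmin : ∀ v : Fin d → ℝ, v ⬝ᵥ v ≤ v ⬝ᵥ (Λ₀ *ᵥ v))
    (Λ : ℕ → Matrix (Fin d) (Fin d) ℝ)
    (hΛ : ∀ t, Λ t = Λ₀ + ∑ i ∈ Finset.Ico 1 t, vecMulVec (φ i) (φ i)) :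
    ∀ t : ℕ, 1 ≤ t →
      Real.log ((Λ (t + 1)).det / (Λ 1).det)
          ≤ ∑ i ∈ Finset.Icc 1 t, φ i ⬝ᵥ ((Λ i)⁻¹ *ᵥ φ i) ∧
      ∑ i ∈ Finset.Icc 1 t, φ i ⬝ᵥ ((Λ i)⁻¹ *ᵥ φ i)
          ≤ 2 * Real.log ((Λ (t + 1)).det / (Λ 1).det) :=
  elliptical_potential_general φ Λ₀ hφ hmin Λ hΛ
end

section
/- (Projected dual ascent telescoping bound) Let Y⁰ = 0 and Y^{k} = Proj_{[0,χ]}(Y^{k-1} + η·g_{k-1}) for k = 1,…,K+1, where |g_k| ≤ H for all k and each g_k ≤ c_k + s (with s ≥ 0 fixed). Then -∑_{k=1}^{K} Y^{k}·c_{k} ≤ ∑_{k=1}^{K} Y^k·s + (η/2)·H²·(K+1). More precisely: if g_k = b - V_k and V*_g ≥ b, then -∑_{k=1}^{K} Y^k·(V*_g - V_k) ≤ (η·H²·(K+1))/2. -/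
/-!
Write `g_k = b - V_k`. Projection onto `[0, χ]` fixes `0` and is `1`-Lipschitz, so
`(Y^{k+1})² ≤ (Y^k + η g_k)² ≤ (Y^k)² + 2η Y^k g_k + η² H²`. Telescoping from `Y⁰ = 0` and
dropping `(Y^{K+1})² ≥ 0` gives `-∑_{k ≤ K} Y^k g_k ≤ (η/2) H² (K+1)`, and
`Y^k (V_k - V*_g) ≤ -Y^k g_k` because `Y^k ≥ 0` and `b ≤ V*_g`.
-/

open Finset

/-- Projection onto the interval `[0, χ]`. -/
noncomputable def projInterval (χ x : ℝ) : ℝ := min (max x 0) χ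

theorem projInterval_nonneg {χ : ℝ} (hχ : 0 ≤ χ) (x : ℝ) : 0 ≤ projInterval χ x :=
  le_min (le_max_right x 0) hχ

theorem abs_projInterval_le {χ : ℝ} (hχ : 0 ≤ χ) (x : ℝ) : |projInterval χ x| ≤ |x| := by
  rw [abs_of_nonneg (projInterval_nonneg hχ x)]
  exact (min_le_left _ _).trans (max_le (le_abs_self x) (abs_nonneg x))

theorem sq_sub_sq_le_of_sq_le_sq_add {y y' η g H : ℝ} (hy' : y' ^ 2 ≤ (y + η * g) ^ 2)
    (hg : |g| ≤ H) : y' ^ 2 - y ^ 2 ≤ 2 * η * (y * g) + η ^ 2 * H ^ 2 := by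
  have hg2 : g ^ 2 ≤ H ^ 2 := sq_le_sq' (abs_le.mp hg).1 (abs_le.mp hg).2
  nlinarith [mul_le_mul_of_nonneg_left hg2 (sq_nonneg η)]

theorem sq_sub_sq_le_sum_of_forall_step {Y g : ℕ → ℝ} {η C : ℝ}
    (hstep : ∀ k, Y (k + 1) ^ 2 - Y k ^ 2 ≤ 2 * η * (Y k * g k) + C) (n : ℕ) :
    Y n ^ 2 - Y 0 ^ 2 ≤ 2 * η * ∑ k ∈ range n, Y k * g k + n * C := by
  calc Y n ^ 2 - Y 0 ^ 2 = ∑ k ∈ range n, (Y (k + 1) ^ 2 - Y k ^ 2) :=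
        (sum_range_sub (fun k ↦ Y k ^ 2) n).symm
    _ ≤ ∑ k ∈ range n, (2 * η * (Y k * g k) + C) := sum_le_sum fun k _ ↦ hstep k
    _ = 2 * η * ∑ k ∈ range n, Y k * g k + n * C := by
        rw [sum_add_distrib, mul_sum, sum_const, card_range, nsmul_eq_mul]

theorem dual_ascent_telescope_general (χ η H : ℝ) (K : ℕ) (b Vgstar : ℝ)
    (V : ℕ → ℝ) (Y : ℕ → ℝ)
    (hχ : 0 < χ) (hη : 0 < η)
    (hVb : ∀ k, |b - V k| ≤ H)
    (hVg : b ≤ Vgstar)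
    (hY0 : Y 0 = 0)
    (hYrec : ∀ k, Y (k + 1) = projInterval χ (Y k + η * (b - V k))) :
    ∑ k ∈ Finset.Icc 1 K, Y k * (V k - Vgstar) ≤ η / 2 * H ^ 2 * (K + 1) := by
  have hY_nonneg : ∀ k, 0 ≤ Y k
    | 0 => hY0.ge
    | k + 1 => hYrec k ▸ projInterval_nonneg hχ.le _
  have hstep (k : ℕ) : Y (k + 1) ^ 2 - Y k ^ 2 ≤ 2 * η * (Y k * (b - V k)) + η ^ 2 * H ^ 2 :=
    sq_sub_sq_le_of_sq_le_sq_add (sq_le_sq.mpr (hYrec k ▸ abs_projInterval_le hχ.le _)) (hVb k)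
  have htelescope := sq_sub_sq_le_sum_of_forall_step hstep (K + 1)
  have hshift :
      ∑ k ∈ Icc 1 K, Y k * (V k - Vgstar) = ∑ k ∈ range (K + 1), Y k * (V k - Vgstar) := by
    rw [range_eq_Ico, sum_eq_sum_Ico_succ_bot K.succ_pos, hY0, zero_mul, zero_add]
    rfl
  have hgap :
      ∑ k ∈ range (K + 1), Y k * (V k - Vgstar) ≤ -∑ k ∈ range (K + 1), Y k * (b - V k) := by
    rw [← sum_neg_distrib]
    exact sum_le_sum fun k _ ↦ by nlinarith [hY_nonneg k]
  rw [hshift]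
  push_cast at htelescope
  nlinarith [sq_nonneg (Y (K + 1))]

/-- Projected dual ascent telescoping bound: with `Y⁰ = 0`,
`Y^k = Proj_{[0,χ]}(Y^{k-1} + η (b - V_{k-1}))`, `|b - V_k| ≤ H` and `V*_g ≥ b`,
`∑_{k=1}^K Y^k (V_k - V*_g) ≤ (η/2) H² (K+1)`, i.e.
`-∑_{k=1}^K Y^k (V*_g - V_k) ≤ (η/2) H² (K+1)`. -/
theorem dual_ascent_telescope (χ η H : ℝ) (K : ℕ) (b Vgstar : ℝ)
    (V : ℕ → ℝ) (Y : ℕ → ℝ)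
    (hχ : 0 < χ) (hη : 0 < η) (hH : 0 < H) (hK : 1 ≤ K)
    (hVb : ∀ k, |b - V k| ≤ H)
    (hVg : b ≤ Vgstar)
    (hY0 : Y 0 = 0)
    (hYrec : ∀ k, Y (k + 1) = projInterval χ (Y k + η * (b - V k))) :
    ∑ k ∈ Finset.Icc 1 K, Y k * (V k - Vgstar) ≤ η / 2 * H ^ 2 * (K + 1) :=
  dual_ascent_telescope_general χ η H K b Vgstar V Y hχ hη hVb hVg hY0 hYrec
end

section
/- (Performance difference lemma, finite-horizon) For any two policies π, π' and any MDP with horizon H, value functions V_h^π and action-value functions Q_h^π satisfying the Bellman equations, V_1^{π'}(x₁) - V_1^{π}(x₁) = E_{π'}[ ∑_{h=1}^{H} ⟨Q_h^{π}(x_h, ·), π'_h(·|x_h) - π_h(·|x_h)⟩ | x₁ ], where the expectation is over trajectories generated by π'. -/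
open Finset

variable {S A : Type*}

/-- Value function by backward recursion, parameterized by steps-to-go:
`mdpV H P r π t` is the value function at step `h = H + 1 - t`
(so `mdpV H P r π H = V_1^π` and `mdpV H P r π 0 = V_{H+1}^π = 0`). -/
noncomputable def mdpV [Fintype S] [Fintype A]
    (H : ℕ) (P : ℕ → S → A → S → ℝ) (r : ℕ → S → A → ℝ)
    (π : ℕ → S → A → ℝ) : ℕ → S → ℝ
  | 0 => fun _ => 0
  | (t + 1) => fun x => ∑ a, π (H - t) x a *
      (r (H - t) x a + ∑ x', P (H - t) x a x' * mdpV H P r π t x')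

/-- Action-value function at step `h`: `Q_h^π(x,a) = r_h(x,a) + (P_h V_{h+1}^π)(x,a)`. -/
noncomputable def mdpQ [Fintype S] [Fintype A]
    (H : ℕ) (P : ℕ → S → A → S → ℝ) (r : ℕ → S → A → ℝ)
    (π : ℕ → S → A → ℝ) (h : ℕ) (x : S) (a : A) : ℝ :=
  r h x a + ∑ x', P h x a x' * mdpV H P r π (H - h) x'

/-- State-visitation distribution of policy `π` started at `x₁`:
`mdpOcc P x₁ π (h-1)` is the law of `x_h` under `π`. -/
noncomputable def mdpOcc [Fintype S] [Fintype A] [DecidableEq S]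
    (P : ℕ → S → A → S → ℝ) (x₁ : S) (π : ℕ → S → A → ℝ) : ℕ → S → ℝ
  | 0 => fun x => if x = x₁ then 1 else 0
  | (t + 1) => fun x' => ∑ x, ∑ a, mdpOcc P x₁ π t x * π (t + 1) x a * P (t + 1) x a x'

/-!
Both values obey the Bellman equation `V_h = ⟨π_h, Q_h⟩`, so the gap at step `h` splits into the
advantage term `⟨π'_h - π_h, Q_h^π⟩` plus the gap at step `h + 1` averaged over one transition of
`π'`. Averaging over the law of `x_h` under `π'` makes these identities telescope from `h = 1`
to `h = H + 1`, where both values vanish.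
-/

theorem Finset.sum_Icc_eq_sub_of_eq_add {M : Type*} [AddCommGroup M] {f g : ℕ → M} {n : ℕ}
    (hfg : ∀ k ∈ Icc 1 n, f k = g k + f (k + 1)) :
    ∑ k ∈ Icc 1 n, g k = f 1 - f (n + 1) := by
  rw [← neg_sub, ← sum_Ico_sub f (Nat.le_add_left 1 n), Ico_add_one_right_eq_Icc,
    ← sum_neg_distrib]
  refine sum_congr rfl fun k hk => ?_
  rw [hfg k hk]
  abel

section

variable [Fintype S] [Fintype A] (H : ℕ) (P : ℕ → S → A → S → ℝ) (r : ℕ → S → A → ℝ)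

theorem mdpV_eq_sum_mul_mdpQ (π : ℕ → S → A → ℝ) {h : ℕ} (hh : h ≤ H) (x : S) :
    mdpV H P r π (H + 1 - h) x = ∑ a, π h x a * mdpQ H P r π h x a := by
  rw [Nat.sub_add_comm hh, mdpV, Nat.sub_sub_self hh]
  rfl

theorem mdpQ_sub_mdpQ (π π' : ℕ → S → A → ℝ) (h : ℕ) (x : S) (a : A) :
    mdpQ H P r π' h x a - mdpQ H P r π h x a
      = ∑ x', P h x a x' * (mdpV H P r π' (H - h) x' - mdpV H P r π (H - h) x') := by
  simp only [mdpQ, mul_sub, sum_sub_distrib, add_sub_add_left_eq_sub]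

theorem mdpV_sub_mdpV (π π' : ℕ → S → A → ℝ) {h : ℕ} (hh : h ≤ H) (x : S) :
    mdpV H P r π' (H + 1 - h) x - mdpV H P r π (H + 1 - h) x
      = ∑ a, (π' h x a - π h x a) * mdpQ H P r π h x a
        + ∑ a, π' h x a *
            ∑ x', P h x a x' * (mdpV H P r π' (H - h) x' - mdpV H P r π (H - h) x') := by
  simp only [mdpV_eq_sum_mul_mdpQ H P r _ hh, ← mdpQ_sub_mdpQ, ← sum_sub_distrib,
    ← sum_add_distrib]
  refine sum_congr rfl fun a _ => ?_
  ring

end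

theorem sum_mdpOcc_succ_mul [Fintype S] [Fintype A] [DecidableEq S]
    (P : ℕ → S → A → S → ℝ) (x₁ : S) (π : ℕ → S → A → ℝ) (k : ℕ) (F : S → ℝ) :
    ∑ x', mdpOcc P x₁ π (k + 1) x' * F x'
      = ∑ x, mdpOcc P x₁ π k x * ∑ a, π (k + 1) x a * ∑ x', P (k + 1) x a x' * F x' := by
  simp only [mdpOcc, sum_mul, mul_sum]
  rw [sum_comm]
  refine sum_congr rfl fun x _ => ?_
  rw [sum_comm]
  refine sum_congr rfl fun a _ => sum_congr rfl fun x' _ => ?_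
  ring

theorem performance_difference_general [Fintype S] [Fintype A] [DecidableEq S]
    (H : ℕ)
    (P : ℕ → S → A → S → ℝ) (r : ℕ → S → A → ℝ)
    (π π' : ℕ → S → A → ℝ) (x₁ : S) :
    mdpV H P r π' H x₁ - mdpV H P r π H x₁
      = ∑ h ∈ Finset.Icc 1 H, ∑ x, mdpOcc P x₁ π' (h - 1) x *
          ∑ a, (π' h x a - π h x a) * mdpQ H P r π h x a := by
  set f : ℕ → ℝ := fun h => ∑ x, mdpOcc P x₁ π' (h - 1) x *
    (mdpV H P r π' (H + 1 - h) x - mdpV H P r π (H + 1 - h) x)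
  have hf_one : f 1 = mdpV H P r π' H x₁ - mdpV H P r π H x₁ := by simp [f, mdpOcc]
  have hf_last : f (H + 1) = 0 := by simp [f, mdpV]
  have hf_step : ∀ h ∈ Icc 1 H, f h = (∑ x, mdpOcc P x₁ π' (h - 1) x *
      ∑ a, (π' h x a - π h x a) * mdpQ H P r π h x a) + f (h + 1) := by
    intro h hh
    obtain ⟨k, rfl⟩ : ∃ k, h = k + 1 := ⟨h - 1, by grind⟩
    simp only [f, mdpV_sub_mdpV H P r π π' (mem_Icc.mp hh).2, mul_add, sum_add_distrib]
    simp [sum_mdpOcc_succ_mul]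
  rw [← hf_one, sum_Icc_eq_sub_of_eq_add hf_step, hf_last, sub_zero]

/-- Performance difference lemma (finite horizon):
`V_1^{π'}(x₁) - V_1^{π}(x₁)
  = E_{π'}[ ∑_{h=1}^H ⟨Q_h^π(x_h,·), π'_h(·|x_h) - π_h(·|x_h)⟩ ]`,
where the expectation over trajectories of `π'` is written via the visitation
distributions `mdpOcc`. -/
theorem performance_difference [Fintype S] [Fintype A] [DecidableEq S]
    (H : ℕ) (hH : 1 ≤ H)
    (P : ℕ → S → A → S → ℝ) (r : ℕ → S → A → ℝ)
    (π π' : ℕ → S → A → ℝ) (x₁ : S)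
    (hP : ∀ h x a, (∀ x', 0 ≤ P h x a x') ∧ ∑ x', P h x a x' = 1)
    (hr : ∀ h x a, r h x a ∈ Set.Icc (0 : ℝ) 1)
    (hπ : ∀ h x, (∀ a, 0 ≤ π h x a) ∧ ∑ a, π h x a = 1)
    (hπ' : ∀ h x, (∀ a, 0 ≤ π' h x a) ∧ ∑ a, π' h x a = 1) :
    mdpV H P r π' H x₁ - mdpV H P r π H x₁
      = ∑ h ∈ Finset.Icc 1 H, ∑ x, mdpOcc P x₁ π' (h - 1) x *
          ∑ a, (π' h x a - π h x a) * mdpQ H P r π h x a :=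
  performance_difference_general H P r π π' x₁
end

section
/- (Optimism of truncated estimated Q-functions) Suppose Q̂, r̂ : S×A → ℝ and V̂ : S → ℝ, P̂ a sub-stochastic kernel, and Γ : S×A → ℝ≥0 satisfy for all (x,a): |r̂(x,a) - r(x,a)| ≤ Γ(x,a) and |∑_{x'} P̂(x'|x,a)V̂(x') - ∑_{x'} P(x'|x,a)V̂(x')| ≤ Γ(x,a). Define Q(x,a) = min( r̂(x,a) + ∑_{x'} P̂(x'|x,a)V̂(x') + 2Γ(x,a), H-h+1 )⁺ and assume r(x,a) + ∑_{x'}P(x'|x,a)V̂(x') ≤ H-h+1 and r(x,a) + ∑_{x'}P(x'|x,a)V̂(x') ≥ 0. Then the prediction error ι(x,a) = r(x,a) + ∑_{x'} P(x'|x,a)V̂(x') - Q(x,a) satisfies -4Γ(x,a) ≤ ι(x,a) ≤ 0 for all (x,a). -/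
open Finset

/-! The bonus `2Γ` absorbs both estimation errors, so the untruncated estimate
`r̂ + P̂V̂ + 2Γ` lies in `[T, T + 4Γ]` with `T = r + PV̂`. Truncation to `[0, H-h+1]`
keeps it there, because `T` itself lies in that interval. -/

lemma add_add_two_mul_mem_Icc_of_abs_sub_le {a b a' b' γ : ℝ}
    (ha : |a' - a| ≤ γ) (hb : |b' - b| ≤ γ) :
    a' + b' + 2 * γ ∈ Set.Icc (a + b) (a + b + 4 * γ) := by
  obtain ⟨ha₁, ha₂⟩ := abs_le.1 ha
  obtain ⟨hb₁, hb₂⟩ := abs_le.1 hb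
  constructor <;> linarith

lemma max_min_mem_Icc_of_mem_Icc {t y c δ : ℝ} (ht₀ : 0 ≤ t) (htc : t ≤ c)
    (hy : y ∈ Set.Icc t (t + δ)) : max (min y c) 0 ∈ Set.Icc t (t + δ) :=
  ⟨le_max_of_le_left (le_min hy.1 htc),
    max_le ((min_le_left y c).trans hy.2) (by linarith [hy.1, hy.2])⟩

theorem optimism_truncated_Q_general {S A : Type*} [Fintype S]
    (H h : ℕ)
    (r rhat : S → A → ℝ) (Vhat : S → ℝ)
    (P Phat : S → A → S → ℝ) (Γ : S → A → ℝ) (Q ι : S → A → ℝ)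
    (hrerr : ∀ x a, |rhat x a - r x a| ≤ Γ x a)
    (hPerr : ∀ x a,
      |(∑ x', Phat x a x' * Vhat x') - ∑ x', P x a x' * Vhat x'| ≤ Γ x a)
    (hQ : ∀ x a, Q x a =
      max (min (rhat x a + (∑ x', Phat x a x' * Vhat x') + 2 * Γ x a)
        ((H : ℝ) - h + 1)) 0)
    (hub : ∀ x a, r x a + (∑ x', P x a x' * Vhat x') ≤ (H : ℝ) - h + 1)
    (hlb : ∀ x a, 0 ≤ r x a + (∑ x', P x a x' * Vhat x'))
    (hι : ∀ x a, ι x a = r x a + (∑ x', P x a x' * Vhat x') - Q x a) :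
    ∀ x a, -(4 * Γ x a) ≤ ι x a ∧ ι x a ≤ 0 := by
  intro x a
  have hQ_mem := max_min_mem_Icc_of_mem_Icc (hlb x a) (hub x a)
    (add_add_two_mul_mem_Icc_of_abs_sub_le (hrerr x a) (hPerr x a))
  rw [← hQ x a] at hQ_mem
  rw [hι x a]
  constructor <;> linarith [hQ_mem.1, hQ_mem.2]

/-- Optimism of truncated estimated Q-functions: if the reward and transition
estimates are within a bonus `Γ` of the truth, and
`Q(x,a) = max(min(r̂ + P̂V̂ + 2Γ, H-h+1), 0)`, then the prediction error
`ι = r + PV̂ - Q` satisfies `-4Γ ≤ ι ≤ 0`. -/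
theorem optimism_truncated_Q {S A : Type*} [Fintype S] [Fintype A]
    (H h : ℕ) (hh1 : 1 ≤ h) (hhH : h ≤ H)
    (r rhat : S → A → ℝ) (Vhat : S → ℝ)
    (P Phat : S → A → S → ℝ) (Γ : S → A → ℝ) (Q ι : S → A → ℝ)
    (hr : ∀ x a, r x a ∈ Set.Icc (0 : ℝ) 1)
    (hP : ∀ x a, (∀ x', 0 ≤ P x a x') ∧ ∑ x', P x a x' = 1)
    (hPhat : ∀ x a x', 0 ≤ Phat x a x')
    (hVhat : ∀ x, Vhat x ∈ Set.Icc (0 : ℝ) (H : ℝ))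
    (hΓ : ∀ x a, 0 ≤ Γ x a)
    (hrerr : ∀ x a, |rhat x a - r x a| ≤ Γ x a)
    (hPerr : ∀ x a,
      |(∑ x', Phat x a x' * Vhat x') - ∑ x', P x a x' * Vhat x'| ≤ Γ x a)
    (hQ : ∀ x a, Q x a =
      max (min (rhat x a + (∑ x', Phat x a x' * Vhat x') + 2 * Γ x a)
        ((H : ℝ) - h + 1)) 0)
    (hub : ∀ x a, r x a + (∑ x', P x a x' * Vhat x') ≤ (H : ℝ) - h + 1)
    (hlb : ∀ x a, 0 ≤ r x a + (∑ x', P x a x' * Vhat x'))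
    (hι : ∀ x a, ι x a = r x a + (∑ x', P x a x' * Vhat x') - Q x a) :
    ∀ x a, -(4 * Γ x a) ≤ ι x a ∧ ι x a ≤ 0 :=
  optimism_truncated_Q_general H h r rhat Vhat P Phat Γ Q ι hrerr hPerr hQ hub hlb hι
end
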